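/- Let χ_B be the indicator of the open unit ball B ⊂ ℝ^d, and L the Legendre operator. For all Schwartz f, g on ℝ^d: ⟨χ_B f, L g⟩ = ⟨L f, χ_B g⟩ in L²(ℝ^d); i.e., the truncation χ_B f lies in the domain of the adjoint L* and L*(χ_B f) = χ_B (L f). -/

import Mathlib

open MeasureTheory Filter Topology
set_option maxHeartbeats 1000000
noncomputable section

/-- Euclidean space ℝ^d. -/
abbrev Ed (d : ℕ) := EuclideanSpace ℝ (Fin d)

/-- Partial derivative ∂ᵢ of a complex-valued function. -/
def pd {d : ℕ} (i : Fin d) (f : Ed d → ℂ) (x : Ed d) : ℂ :=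
  fderiv ℝ f x (EuclideanSpace.single i 1)

/-- Laplacian Δ = ∑ᵢ ∂ᵢ². -/
def lap {d : ℕ} (f : Ed d → ℂ) (x : Ed d) : ℂ := ∑ i, pd i (pd i f) x

/-- Radial derivative r∂ᵣ = ∑ᵢ xᵢ ∂ᵢ. -/
def rdr {d : ℕ} (f : Ed d → ℂ) (x : Ed d) : ℂ := ∑ i, (x i : ℂ) * pd i f x

/-- Legendre operator L f = ∇·((1-|x|²)∇f). -/
def legendreOp {d : ℕ} (f : Ed d → ℂ) (x : Ed d) : ℂ :=
  ∑ i, pd i (fun y => ((1 - ‖y‖ ^ 2 : ℝ) : ℂ) * pd i f y) x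

/-- Prolate operator W f = L f - |x|² f. -/
def prolateOp {d : ℕ} (f : Ed d → ℂ) (x : Ed d) : ℂ :=
  legendreOp f x - ((‖x‖ ^ 2 : ℝ) : ℂ) * f x

variable {d : ℕ}

/-- derivative of the squared norm -/
def nD (x : Ed d) : Ed d →L[ℝ] ℝ :=
  (fderivInnerCLM ℝ (x, x)).comp ((ContinuousLinearMap.id ℝ (Ed d)).prod
    (ContinuousLinearMap.id ℝ (Ed d)))

lemma hasFDerivAt_nsq (x : Ed d) : HasFDerivAt (fun y : Ed d => ‖y‖ ^ 2) (nD x) x := by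
  have h := ((hasFDerivAt_id x).inner ℝ (hasFDerivAt_id x))
  have e : (fun y : Ed d => ‖y‖ ^ 2) = fun y : Ed d => (inner ℝ y y : ℝ) := by
    ext y; rw [real_inner_self_eq_norm_sq]
  rw [e]
  exact h

lemma nD_apply (x : Ed d) (i : Fin d) : nD x (EuclideanSpace.single i (1:ℝ)) = 2 * x i := by
  simp only [nD, ContinuousLinearMap.comp_apply, ContinuousLinearMap.prod_apply,
    ContinuousLinearMap.id_apply, fderivInnerCLM_apply]
  rw [EuclideanSpace.inner_single_right, EuclideanSpace.inner_single_left]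
  simp; ring

lemma abs_coord_le_norm (x : Ed d) (i : Fin d) : |x i| ≤ ‖x‖ := by
  rw [EuclideanSpace.norm_eq, ← Real.sqrt_sq_eq_abs]
  apply Real.sqrt_le_sqrt
  have : x i ^ 2 ≤ ∑ j : Fin d, ‖x j‖ ^ 2 := by
    have := Finset.single_le_sum (f := fun j => ‖x j‖ ^ 2) (fun j _ => sq_nonneg _)
      (Finset.mem_univ i)
    simpa [Real.norm_eq_abs, sq_abs] using this
  exact this

/-- smooth approximation of the positive part -/
def pA (ε t : ℝ) : ℝ := (Real.sqrt (t ^ 2 + ε ^ 2) + t) / 2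

def qA (ε t : ℝ) : ℝ := (t / Real.sqrt (t ^ 2 + ε ^ 2) + 1) / 2

lemma hasDerivAt_pA {ε : ℝ} (hε : ε ≠ 0) (t : ℝ) : HasDerivAt (pA ε) (qA ε t) t := by
  have h0 : t ^ 2 + ε ^ 2 ≠ 0 := by positivity
  have hs : Real.sqrt (t ^ 2 + ε ^ 2) ≠ 0 := by
    rw [Real.sqrt_ne_zero']; positivity
  have h1 : HasDerivAt (fun t : ℝ => t ^ 2 + ε ^ 2) (2 * t) t := by
    simpa using (hasDerivAt_pow 2 t).add_const (ε ^ 2)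
  have h2 := (Real.hasDerivAt_sqrt h0).comp t h1
  have h3 := (h2.add (hasDerivAt_id t)).div_const 2
  refine HasDerivAt.congr_deriv h3 ?_
  unfold qA
  field_simp

lemma pA_nonneg {ε : ℝ} (t : ℝ) : 0 ≤ pA ε t := by
  have h : |t| ≤ Real.sqrt (t ^ 2 + ε ^ 2) := by
    rw [← Real.sqrt_sq_eq_abs]; exact Real.sqrt_le_sqrt (by nlinarith [sq_nonneg ε])
  have := neg_abs_le t
  unfold pA; linarith

lemma pA_le {ε : ℝ} (hε : 0 ≤ ε) (hε1 : ε ≤ 1) (t : ℝ) : pA ε t ≤ |t| + 1 := by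
  have h : Real.sqrt (t ^ 2 + ε ^ 2) ≤ |t| + ε := by
    rw [show t ^ 2 + ε ^ 2 = |t| ^ 2 + ε ^ 2 by rw [sq_abs]]
    have := Real.sqrt_le_sqrt (show |t| ^ 2 + ε ^ 2 ≤ (|t| + ε) ^ 2 by nlinarith [abs_nonneg t])
    calc Real.sqrt (|t| ^ 2 + ε ^ 2) ≤ Real.sqrt ((|t| + ε) ^ 2) := this
      _ = |t| + ε := Real.sqrt_sq (by positivity)
  have := le_abs_self t
  unfold pA; linarith

lemma qA_nonneg {ε : ℝ} (hε : ε ≠ 0) (t : ℝ) : 0 ≤ qA ε t := by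
  have h : |t| ≤ Real.sqrt (t ^ 2 + ε ^ 2) := by
    rw [← Real.sqrt_sq_eq_abs]; exact Real.sqrt_le_sqrt (by nlinarith [sq_nonneg ε])
  have hs : 0 < Real.sqrt (t ^ 2 + ε ^ 2) := by
    rw [Real.sqrt_pos]; positivity
  have : -1 ≤ t / Real.sqrt (t ^ 2 + ε ^ 2) := by
    rw [neg_le, ← neg_div, div_le_one hs]
    have := neg_abs_le t; linarith
  unfold qA; linarith

lemma qA_le_one {ε : ℝ} (hε : ε ≠ 0) (t : ℝ) : qA ε t ≤ 1 := by
  have h : |t| ≤ Real.sqrt (t ^ 2 + ε ^ 2) := by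
    rw [← Real.sqrt_sq_eq_abs]; exact Real.sqrt_le_sqrt (by nlinarith [sq_nonneg ε])
  have hs : 0 < Real.sqrt (t ^ 2 + ε ^ 2) := by
    rw [Real.sqrt_pos]; positivity
  have : t / Real.sqrt (t ^ 2 + ε ^ 2) ≤ 1 := by
    rw [div_le_one hs]
    have := le_abs_self t; linarith
  unfold qA; linarith

lemma tendsto_pA (t : ℝ) :
    Tendsto (fun n : ℕ => pA (1 / (n + 1)) t) atTop (nhds (max t 0)) := by
  have hε : Tendsto (fun n : ℕ => (1 / (n + 1) : ℝ)) atTop (nhds 0) :=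
    tendsto_one_div_add_atTop_nhds_zero_nat
  have h1 : Tendsto (fun n : ℕ => Real.sqrt (t ^ 2 + (1 / (n + 1) : ℝ) ^ 2)) atTop
      (nhds (|t|)) := by
    have : Tendsto (fun n : ℕ => t ^ 2 + (1 / (n + 1) : ℝ) ^ 2) atTop (nhds (t ^ 2)) := by
      simpa using tendsto_const_nhds.add ((hε.pow 2))
    have := (Real.continuous_sqrt.tendsto (t ^ 2)).comp this
    simpa [Real.sqrt_sq_eq_abs, Function.comp_def] using this
  have h2 : Tendsto (fun n : ℕ => pA (1 / (n + 1)) t) atTop (nhds ((|t| + t) / 2)) := by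
    unfold pA
    exact (h1.add tendsto_const_nhds).div_const 2
  convert h2 using 2
  rcases le_or_gt t 0 with h | h
  · rw [abs_of_nonpos h, max_eq_right h]; ring
  · rw [abs_of_pos h, max_eq_left h.le]; ring

lemma tendsto_qA {t : ℝ} (ht : t ≠ 0) :
    Tendsto (fun n : ℕ => qA (1 / (n + 1)) t) atTop (nhds (if 0 < t then 1 else 0)) := by
  have hε : Tendsto (fun n : ℕ => (1 / (n + 1) : ℝ)) atTop (nhds 0) :=
    tendsto_one_div_add_atTop_nhds_zero_nat
  have h1 : Tendsto (fun n : ℕ => Real.sqrt (t ^ 2 + (1 / (n + 1) : ℝ) ^ 2)) atTop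
      (nhds (|t|)) := by
    have : Tendsto (fun n : ℕ => t ^ 2 + (1 / (n + 1) : ℝ) ^ 2) atTop (nhds (t ^ 2)) := by
      simpa using tendsto_const_nhds.add ((hε.pow 2))
    have := (Real.continuous_sqrt.tendsto (t ^ 2)).comp this
    simpa [Real.sqrt_sq_eq_abs, Function.comp_def] using this
  have habs : |t| ≠ 0 := abs_ne_zero.2 ht
  have h2 : Tendsto (fun n : ℕ => qA (1 / (n + 1)) t) atTop
      (nhds ((t / |t| + 1) / 2)) := by
    unfold qA
    exact ((tendsto_const_nhds.div h1 habs).add tendsto_const_nhds).div_const 2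
  convert h2 using 2
  rcases lt_or_gt_of_ne ht with h | h
  · rw [if_neg (by linarith), abs_of_neg h]
    field_simp
    ring
  · rw [if_pos h, abs_of_pos h]
    field_simp
    ring

lemma continuous_pA {ε : ℝ} (hε : ε ≠ 0) : Continuous (pA ε) := by
  unfold pA
  apply Continuous.div_const
  apply Continuous.add _ continuous_id
  exact Real.continuous_sqrt.comp ((continuous_pow 2).add continuous_const)

lemma continuous_qA {ε : ℝ} (hε : ε ≠ 0) : Continuous (qA ε) := by
  unfold qA
  apply Continuous.div_const
  apply Continuous.add _ continuous_const
  apply Continuous.div continuous_id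
    (Real.continuous_sqrt.comp ((continuous_pow 2).add continuous_const))
  intro t
  show Real.sqrt (t ^ 2 + ε ^ 2) ≠ 0
  rw [Real.sqrt_ne_zero']
  positivity

lemma weight_ibp (i : Fin d) (F Fd : Ed d → ℂ) (F' : Ed d → (Ed d →L[ℝ] ℂ))
    (hF : ∀ x, HasFDerivAt F (F' x) x)
    (hFd : ∀ x, Fd x = F' x (EuclideanSpace.single i 1))
    (hFc : Continuous F) (hFdc : Continuous Fd)
    (hFi : Integrable (fun x : Ed d => (2 + ‖x‖ ^ 2) * ‖F x‖))
    (hFdi : Integrable (fun x : Ed d => (2 + ‖x‖ ^ 2) * ‖Fd x‖)) :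
    ∫ x : Ed d, ((max (1 - ‖x‖ ^ 2) 0 : ℝ) : ℂ) * Fd x
      = ∫ x : Ed d, (Metric.ball (0 : Ed d) 1).indicator (fun y => 2 * (y i : ℂ) * F y) x := by
  classical
  haveI : Nontrivial (Ed d) :=
    ⟨EuclideanSpace.single i (1:ℝ), 0, fun h => one_ne_zero (α := ℝ)
      (by simpa using congrArg (fun v : Ed d => v i) h)⟩
  set e : Ed d := EuclideanSpace.single i (1 : ℝ) with he
  set ε : ℕ → ℝ := fun n => 1 / (n + 1) with hε
  have hεne : ∀ n, ε n ≠ 0 := fun n => by positivity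
  have hεpos : ∀ n, (0:ℝ) ≤ ε n := fun n => by positivity
  have hεle : ∀ n, ε n ≤ 1 := fun n => by
    rw [hε]; rw [div_le_one (by positivity)]; simp
  -- the approximating weights and their derivatives
  set u : ℕ → Ed d → ℝ := fun n x => pA (ε n) (1 - ‖x‖ ^ 2) with hu
  set q : ℕ → Ed d → ℝ := fun n x => qA (ε n) (1 - ‖x‖ ^ 2) with hq
  set D : ℕ → Ed d → (Ed d →L[ℝ] ℂ) := fun n x =>
    Complex.ofRealCLM.comp ((q n x) • ((0 : Ed d →L[ℝ] ℝ) - nD x)) with hD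
  have hUderiv : ∀ n x, HasFDerivAt (fun y : Ed d => ((u n y : ℝ) : ℂ)) (D n x) x := by
    intro n x
    have hg : HasFDerivAt (fun y : Ed d => 1 - ‖y‖ ^ 2) ((0 : Ed d →L[ℝ] ℝ) - nD x) x :=
      (hasFDerivAt_const (1:ℝ) x).sub (hasFDerivAt_nsq x)
    have h1 : HasFDerivAt (fun y : Ed d => pA (ε n) (1 - ‖y‖ ^ 2))
        ((q n x) • ((0 : Ed d →L[ℝ] ℝ) - nD x)) x :=
      (hasDerivAt_pA (hεne n) (1 - ‖x‖ ^ 2)).comp_hasFDerivAt (h₂ := pA (ε n)) x hg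
    exact Complex.ofRealCLM.hasFDerivAt.comp x h1
  have hDval : ∀ n x, D n x e = ((q n x * (-(2 * x i)) : ℝ) : ℂ) := by
    intro n x
    simp only [hD, ContinuousLinearMap.comp_apply, ContinuousLinearMap.smul_apply,
      ContinuousLinearMap.sub_apply, ContinuousLinearMap.zero_apply, he, nD_apply,
      Complex.ofRealCLM_apply, smul_eq_mul]
    push_cast
    ring
  -- norm bounds
  have hub : ∀ n x, |u n x| ≤ 2 + ‖x‖ ^ 2 := by
    intro n x
    rw [abs_of_nonneg (pA_nonneg _)]
    calc pA (ε n) (1 - ‖x‖ ^ 2) ≤ |1 - ‖x‖ ^ 2| + 1 := pA_le (hεpos n) (hεle n) _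
      _ ≤ 2 + ‖x‖ ^ 2 := by
          rcases abs_cases (1 - ‖x‖ ^ 2) with ⟨h, _⟩ | ⟨h, _⟩ <;> nlinarith [sq_nonneg ‖x‖]
  have hqb : ∀ n x, |q n x| ≤ 1 := by
    intro n x
    simp only [hq]
    rw [abs_le]
    refine ⟨?_, qA_le_one (hεne n) _⟩
    linarith [qA_nonneg (hεne n) (1 - ‖x‖ ^ 2)]
  have hxb : ∀ x : Ed d, |(-(2 * x i) : ℝ)| ≤ 2 + ‖x‖ ^ 2 := by
    intro x
    rw [abs_neg, abs_mul, abs_two]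
    have h1 := abs_coord_le_norm x i
    nlinarith [norm_nonneg x, abs_nonneg (x i)]
  -- continuity
  have hnc : Continuous (fun x : Ed d => 1 - ‖x‖ ^ 2) :=
    continuous_const.sub (continuous_norm.pow 2)
  have hucont : ∀ n, Continuous (fun x : Ed d => ((u n x : ℝ) : ℂ)) := fun n =>
    Complex.continuous_ofReal.comp ((continuous_pA (hεne n)).comp hnc)
  have hGcont : ∀ n, Continuous (fun x : Ed d => ((q n x * (-(2 * x i)) : ℝ) : ℂ)) := by
    intro n
    apply Complex.continuous_ofReal.comp
    apply Continuous.mul ((continuous_qA (hεne n)).comp hnc)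
    exact (continuous_const.mul (EuclideanSpace.proj i).continuous).neg
  -- integrabilities for fixed n
  have hI1 : ∀ n, Integrable (fun x : Ed d => ((u n x : ℝ) : ℂ) * Fd x) := by
    intro n
    apply hFdi.mono' (((hucont n).mul hFdc).aestronglyMeasurable)
    filter_upwards with x
    rw [Pi.mul_apply, norm_mul, Complex.norm_real, Real.norm_eq_abs]
    exact mul_le_mul_of_nonneg_right (hub n x) (norm_nonneg _)
  have hI2 : ∀ n, Integrable (fun x : Ed d => ((u n x : ℝ) : ℂ) * F x) := by
    intro n
    apply hFi.mono' (((hucont n).mul hFc).aestronglyMeasurable)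
    filter_upwards with x
    rw [Pi.mul_apply, norm_mul, Complex.norm_real, Real.norm_eq_abs]
    exact mul_le_mul_of_nonneg_right (hub n x) (norm_nonneg _)
  have hI3 : ∀ n, Integrable (fun x : Ed d => ((q n x * (-(2 * x i)) : ℝ) : ℂ) * F x) := by
    intro n
    apply hFi.mono' (((hGcont n).mul hFc).aestronglyMeasurable)
    filter_upwards with x
    rw [Pi.mul_apply, norm_mul, Complex.norm_real, Real.norm_eq_abs, abs_mul]
    apply mul_le_mul_of_nonneg_right _ (norm_nonneg _)
    calc |q n x| * |(-(2 * x i) : ℝ)| ≤ 1 * (2 + ‖x‖ ^ 2) :=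
          mul_le_mul (hqb n x) (hxb x) (abs_nonneg _) zero_le_one
      _ = 2 + ‖x‖ ^ 2 := one_mul _
  -- step 1: integration by parts for each n
  have step1 : ∀ n, ∫ x : Ed d, ((u n x : ℝ) : ℂ) * Fd x
      = - ∫ x : Ed d, ((q n x * (-(2 * x i)) : ℝ) : ℂ) * F x := by
    intro n
    have := integral_bilinear_hasFDerivAt_right_eq_neg_left_of_integrable
      (μ := volume) (B := ContinuousLinearMap.mul ℝ ℂ)
      (f := fun x : Ed d => ((u n x : ℝ) : ℂ)) (f' := D n) (g := F) (g' := F') (v := e)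
      ?_ ?_ ?_ (fun x _ => hUderiv n x) (fun x _ => hF x)
    · simp only [ContinuousLinearMap.mul_apply'] at this
      rw [show (∫ x : Ed d, ((u n x : ℝ) : ℂ) * Fd x)
          = ∫ x : Ed d, ((u n x : ℝ) : ℂ) * (F' x e) from
        integral_congr_ae (by filter_upwards with x; rw [hFd x]), this]
      congr 1
      apply integral_congr_ae
      filter_upwards with x
      rw [hDval n x]
    · simp only [ContinuousLinearMap.mul_apply', hDval n]
      exact hI3 n
    · simp only [ContinuousLinearMap.mul_apply', ← hFd]
      exact hI1 n
    · simp only [ContinuousLinearMap.mul_apply']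
      exact hI2 n
  -- step 2: LHS limit
  have step2 : Tendsto (fun n => ∫ x : Ed d, ((u n x : ℝ) : ℂ) * Fd x) atTop
      (nhds (∫ x : Ed d, ((max (1 - ‖x‖ ^ 2) 0 : ℝ) : ℂ) * Fd x)) := by
    apply tendsto_integral_of_dominated_convergence (fun x => (2 + ‖x‖ ^ 2) * ‖Fd x‖)
      (fun n => ((hucont n).mul hFdc).aestronglyMeasurable) hFdi
    · intro n
      filter_upwards with x
      rw [Pi.mul_apply, norm_mul, Complex.norm_real, Real.norm_eq_abs]
      exact mul_le_mul_of_nonneg_right (hub n x) (norm_nonneg _)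
    · filter_upwards with x
      apply Tendsto.mul _ tendsto_const_nhds
      exact (Complex.continuous_ofReal.tendsto _).comp (tendsto_pA (1 - ‖x‖ ^ 2))
  -- step 3: RHS limit
  have hsphere : ∀ᵐ x : Ed d, ‖x‖ ≠ 1 := by
    have h0 : volume (Metric.sphere (0 : Ed d) 1) = 0 :=
      MeasureTheory.Measure.addHaar_sphere volume 0 1
    rw [ae_iff]
    convert h0 using 2
    ext x
    simp [mem_sphere_zero_iff_norm]
  have step3 : Tendsto (fun n => ∫ x : Ed d, ((q n x * (-(2 * x i)) : ℝ) : ℂ) * F x) atTop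
      (nhds (∫ x : Ed d,
        - (Metric.ball (0 : Ed d) 1).indicator (fun y => 2 * (y i : ℂ) * F y) x)) := by
    apply tendsto_integral_of_dominated_convergence (fun x => (2 + ‖x‖ ^ 2) * ‖F x‖)
      (fun n => ((hGcont n).mul hFc).aestronglyMeasurable) hFi
    · intro n
      filter_upwards with x
      rw [Pi.mul_apply, norm_mul, Complex.norm_real, Real.norm_eq_abs, abs_mul]
      apply mul_le_mul_of_nonneg_right _ (norm_nonneg _)
      calc |q n x| * |(-(2 * x i) : ℝ)| ≤ 1 * (2 + ‖x‖ ^ 2) :=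
            mul_le_mul (hqb n x) (hxb x) (abs_nonneg _) zero_le_one
        _ = 2 + ‖x‖ ^ 2 := one_mul _
    · filter_upwards [hsphere] with x hx
      have ht : (1 - ‖x‖ ^ 2) ≠ 0 := by
        intro h
        apply hx
        nlinarith [norm_nonneg x]
      have hq1 : Tendsto (fun n => q n x) atTop (nhds (if 0 < 1 - ‖x‖ ^ 2 then 1 else 0)) :=
        tendsto_qA ht
      have : Tendsto (fun n => ((q n x * (-(2 * x i)) : ℝ) : ℂ) * F x) atTop
          (nhds (((if 0 < 1 - ‖x‖ ^ 2 then (1:ℝ) else 0) * (-(2 * x i)) : ℝ) * F x)) := by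
        apply Tendsto.mul _ tendsto_const_nhds
        exact (Complex.continuous_ofReal.tendsto _).comp (hq1.mul tendsto_const_nhds)
      simp only [Pi.mul_apply]
      convert this using 2
      rw [Set.indicator_apply]
      have hmem : x ∈ Metric.ball (0 : Ed d) 1 ↔ 0 < 1 - ‖x‖ ^ 2 := by
        rw [Metric.mem_ball, dist_zero_right]
        constructor
        · intro h; nlinarith [norm_nonneg x]
        · intro h; nlinarith [norm_nonneg x]
      by_cases hb : x ∈ Metric.ball (0 : Ed d) 1
      · rw [if_pos hb, if_pos (hmem.1 hb)]
        push_cast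
        ring
      · rw [if_neg hb, if_neg (fun h => hb (hmem.2 h))]
        push_cast
        ring
  -- combine
  have lim2 : Tendsto (fun n => ∫ x : Ed d, ((u n x : ℝ) : ℂ) * Fd x) atTop
      (nhds (∫ x : Ed d,
        (Metric.ball (0 : Ed d) 1).indicator (fun y => 2 * (y i : ℂ) * F y) x)) := by
    simp only [step1]
    rw [show (∫ x : Ed d, (Metric.ball (0 : Ed d) 1).indicator
        (fun y => 2 * (y i : ℂ) * F y) x)
      = - ∫ x : Ed d, - (Metric.ball (0 : Ed d) 1).indicator
        (fun y => 2 * (y i : ℂ) * F y) x by rw [integral_neg, neg_neg]]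
    exact step3.neg
  exact tendsto_nhds_unique step2 lim2

def SchwartzMap.pderivCLM (𝕜 : Type) {d : ℕ} (m : Ed d) :
    SchwartzMap (Ed d) ℂ →L[ℝ] SchwartzMap (Ed d) ℂ :=
  LineDeriv.lineDerivOpCLM ℝ (SchwartzMap (Ed d) ℂ) m

theorem SchwartzMap.pderivCLM_apply (𝕜 : Type) {d : ℕ} (m : Ed d) (f : SchwartzMap (Ed d) ℂ)
    (x : Ed d) : SchwartzMap.pderivCLM 𝕜 m f x = fderiv ℝ f x m := rfl

section helpers
open SchwartzMap
variable {d : ℕ}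

lemma int_bound (φ ψ : SchwartzMap (Ed d) ℂ) :
    Integrable (fun x : Ed d => (2 + ‖x‖ ^ 2) * (‖φ x‖ * ‖ψ x‖)) volume := by
  set C := SchwartzMap.seminorm ℝ 0 0 ψ with hC
  have hC0 : 0 ≤ C := apply_nonneg _ _
  have hb : ∀ x, ‖ψ x‖ ≤ C := fun x => norm_le_seminorm ℝ ψ x
  have h1 : Integrable (fun x : Ed d => C * (2 * ‖φ x‖ + ‖x‖ ^ 2 * ‖φ x‖)) volume := by
    apply Integrable.const_mul
    exact ((φ.integrable (μ := volume)).norm.const_mul 2).add (φ.integrable_pow_mul volume 2)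
  apply h1.mono'
  · apply Continuous.aestronglyMeasurable
    exact (continuous_const.add (continuous_norm.pow 2)).mul
      (φ.continuous.norm.mul ψ.continuous.norm)
  · filter_upwards with x
    rw [Real.norm_of_nonneg (by positivity)]
    have hφ : (0:ℝ) ≤ ‖φ x‖ := norm_nonneg _
    have hψ := hb x
    have hψ0 : (0:ℝ) ≤ ‖ψ x‖ := norm_nonneg _
    have key : (2 + ‖x‖ ^ 2) * (‖φ x‖ * ‖ψ x‖) ≤ (2 + ‖x‖ ^ 2) * (‖φ x‖ * C) :=
      mul_le_mul_of_nonneg_left (mul_le_mul_of_nonneg_left hψ hφ) (by positivity)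
    calc (2 + ‖x‖ ^ 2) * (‖φ x‖ * ‖ψ x‖) ≤ (2 + ‖x‖ ^ 2) * (‖φ x‖ * C) := key
      _ = C * (2 * ‖φ x‖ + ‖x‖ ^ 2 * ‖φ x‖) := by ring

lemma int_dom (φ ψ : SchwartzMap (Ed d) ℂ) {F : Ed d → ℂ}
    (hm : AEStronglyMeasurable F volume)
    (h : ∀ x, ‖F x‖ ≤ (2 + ‖x‖ ^ 2) * (‖φ x‖ * ‖ψ x‖)) : Integrable F volume :=
  (int_bound φ ψ).mono' hm (Filter.Eventually.of_forall h)

lemma int_dom2 (φ₁ ψ₁ φ₂ ψ₂ : SchwartzMap (Ed d) ℂ) {F : Ed d → ℂ}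
    (hm : AEStronglyMeasurable F volume)
    (h : ∀ x, ‖F x‖ ≤ (2 + ‖x‖ ^ 2) * (‖φ₁ x‖ * ‖ψ₁ x‖)
      + (2 + ‖x‖ ^ 2) * (‖φ₂ x‖ * ‖ψ₂ x‖)) : Integrable F volume :=
  ((int_bound φ₁ ψ₁).add (int_bound φ₂ ψ₂)).mono' hm (Filter.Eventually.of_forall h)

lemma int_w (φ ψ : SchwartzMap (Ed d) ℂ) {F : Ed d → ℂ} (hc : Continuous F)
    (h : ∀ x, ‖F x‖ ≤ ‖φ x‖ * ‖ψ x‖) :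
    Integrable (fun x : Ed d => (2 + ‖x‖ ^ 2) * ‖F x‖) volume := by
  apply (int_bound φ ψ).mono'
    ((continuous_const.add (continuous_norm.pow 2)).mul hc.norm).aestronglyMeasurable
  filter_upwards with x
  simp only [Pi.mul_apply, Pi.add_apply, Pi.pow_apply]
  rw [Real.norm_of_nonneg (r := (2 + ‖x‖ ^ 2) * ‖F x‖) (by positivity)]
  exact mul_le_mul_of_nonneg_left (h x) (by positivity)

lemma int_w2 (φ₁ ψ₁ φ₂ ψ₂ : SchwartzMap (Ed d) ℂ) {F : Ed d → ℂ} (hc : Continuous F)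
    (h : ∀ x, ‖F x‖ ≤ ‖φ₁ x‖ * ‖ψ₁ x‖ + ‖φ₂ x‖ * ‖ψ₂ x‖) :
    Integrable (fun x : Ed d => (2 + ‖x‖ ^ 2) * ‖F x‖) volume := by
  apply ((int_bound φ₁ ψ₁).add (int_bound φ₂ ψ₂)).mono'
    ((continuous_const.add (continuous_norm.pow 2)).mul hc.norm).aestronglyMeasurable
  filter_upwards with x
  simp only [Pi.mul_apply, Pi.add_apply, Pi.pow_apply]
  rw [Real.norm_of_nonneg (r := (2 + ‖x‖ ^ 2) * ‖F x‖) (by positivity)]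
  have h2 : (0:ℝ) ≤ 2 + ‖x‖ ^ 2 := by positivity
  calc (2 + ‖x‖ ^ 2) * ‖F x‖ ≤ (2 + ‖x‖ ^ 2) * (‖φ₁ x‖ * ‖ψ₁ x‖ + ‖φ₂ x‖ * ‖ψ₂ x‖) :=
        mul_le_mul_of_nonneg_left (h x) h2
    _ = (2 + ‖x‖ ^ 2) * (‖φ₁ x‖ * ‖ψ₁ x‖) + (2 + ‖x‖ ^ 2) * (‖φ₂ x‖ * ‖ψ₂ x‖) := by ring

/-- derivative of the conjugate of a Schwartz function -/
lemma hasFDerivAt_conj (φ : SchwartzMap (Ed d) ℂ) (x : Ed d) :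
    HasFDerivAt (fun y => (starRingEnd ℂ) (φ y))
      ((Complex.conjCLE.toContinuousLinearMap).comp (fderiv ℝ φ x)) x := by
  have h := (Complex.conjCLE.toContinuousLinearMap.hasFDerivAt
    (x := φ x)).comp x φ.differentiableAt.hasFDerivAt
  have heq : (fun y : Ed d => (starRingEnd ℂ) (φ y))
      = fun y => Complex.conjCLE.toContinuousLinearMap (φ y) := by
    ext y
    simp [Complex.conjCLE_apply]
  rw [heq]
  exact h

lemma conj_comp_apply (φ : SchwartzMap (Ed d) ℂ) (x v : Ed d) :
    ((Complex.conjCLE.toContinuousLinearMap).comp (fderiv ℝ φ x)) v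
      = (starRingEnd ℂ) (fderiv ℝ φ x v) := by
  simp [Complex.conjCLE_apply]

/-- expansion of the Legendre operator applied to a Schwartz function -/
lemma legendre_expand (g : SchwartzMap (Ed d) ℂ) (x : Ed d) :
    legendreOp (⇑g) x = ∑ i, ((((-2 * x i : ℝ)) : ℂ) * pderivCLM ℝ (EuclideanSpace.single i 1) g x
      + ((1 - ‖x‖ ^ 2 : ℝ) : ℂ) * pderivCLM ℝ (EuclideanSpace.single i 1)
          (pderivCLM ℝ (EuclideanSpace.single i 1) g) x) := by
  unfold legendreOp pd
  have key : ∀ i : Fin d, (fderiv ℝ (fun y : Ed d => ((1 - ‖y‖ ^ 2 : ℝ) : ℂ) * fderiv ℝ (⇑g) y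
      (EuclideanSpace.single i 1)) x) (EuclideanSpace.single i 1)
      = (((-2 * x i : ℝ)) : ℂ) * pderivCLM ℝ (EuclideanSpace.single i 1) g x
      + ((1 - ‖x‖ ^ 2 : ℝ) : ℂ) * pderivCLM ℝ (EuclideanSpace.single i 1)
          (pderivCLM ℝ (EuclideanSpace.single i 1) g) x := by
    intro i
    set G1 : SchwartzMap (Ed d) ℂ := pderivCLM ℝ (EuclideanSpace.single i 1) g with hG1
    have hfun : (fun y : Ed d => ((1 - ‖y‖ ^ 2 : ℝ) : ℂ) * fderiv ℝ (⇑g) y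
        (EuclideanSpace.single i 1)) = fun y => ((1 - ‖y‖ ^ 2 : ℝ) : ℂ) * G1 y := by
      ext y
      rw [hG1, pderivCLM_apply]
    rw [hfun]
    have hc : HasFDerivAt (fun y : Ed d => ((1 - ‖y‖ ^ 2 : ℝ) : ℂ))
        (Complex.ofRealCLM.comp ((0 : Ed d →L[ℝ] ℝ) - nD x)) x := by
      apply Complex.ofRealCLM.hasFDerivAt.comp x
      exact (hasFDerivAt_const (1:ℝ) x).sub (hasFDerivAt_nsq x)
    have hd : HasFDerivAt (⇑G1) (fderiv ℝ G1 x) x := G1.differentiableAt.hasFDerivAt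
    have hmul := hc.mul hd
    rw [show (fun y : Ed d => ((1 - ‖y‖ ^ 2 : ℝ) : ℂ) * G1 y)
        = ((fun y : Ed d => ((1 - ‖y‖ ^ 2 : ℝ) : ℂ)) * ⇑G1) from rfl, hmul.fderiv]
    simp only [ContinuousLinearMap.add_apply, ContinuousLinearMap.smul_apply,
      ContinuousLinearMap.comp_apply, ContinuousLinearMap.sub_apply,
      ContinuousLinearMap.zero_apply, nD_apply, Complex.ofRealCLM_apply, smul_eq_mul]
    rw [← pderivCLM_apply ℝ (EuclideanSpace.single i 1) G1 x]
    push_cast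
    ring
  simp only [key]

end helpers

section main
open SchwartzMap
variable {d : ℕ}

lemma wb (x : Ed d) : |max (1 - ‖x‖ ^ 2) 0| ≤ 2 + ‖x‖ ^ 2 := by
  rw [abs_of_nonneg (le_max_right _ _)]
  rcases max_cases (1 - ‖x‖ ^ 2) 0 with ⟨h, _⟩ | ⟨h, _⟩ <;> rw [h] <;> nlinarith [sq_nonneg ‖x‖]

lemma xib (x : Ed d) (i : Fin d) : ‖(2 * (x i : ℂ))‖ ≤ 2 + ‖x‖ ^ 2 := by
  rw [norm_mul]
  have h1 := abs_coord_le_norm x i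
  have : ‖((x i : ℝ) : ℂ)‖ = |x i| := by rw [Complex.norm_real, Real.norm_eq_abs]
  rw [this]
  have h2 : ‖(2 : ℂ)‖ = 2 := by norm_num
  rw [h2]
  nlinarith [norm_nonneg x, abs_nonneg (x i)]

lemma norm_conj_mul (φ ψ : SchwartzMap (Ed d) ℂ) (x : Ed d) :
    ‖(starRingEnd ℂ) (φ x) * ψ x‖ = ‖φ x‖ * ‖ψ x‖ := by
  rw [norm_mul, RCLike.norm_conj]

lemma cont_conj_mul (φ ψ : SchwartzMap (Ed d) ℂ) :
    Continuous (fun x : Ed d => (starRingEnd ℂ) (φ x) * ψ x) := by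
  apply Continuous.mul _ ψ.continuous
  exact Complex.continuous_conj.comp φ.continuous

lemma int_w_prod (φ ψ : SchwartzMap (Ed d) ℂ) :
    Integrable (fun x : Ed d => ((max (1 - ‖x‖ ^ 2) 0 : ℝ) : ℂ) *
      ((starRingEnd ℂ) (φ x) * ψ x)) volume := by
  apply int_dom φ ψ
  · apply Continuous.aestronglyMeasurable
    apply Continuous.mul _ (cont_conj_mul φ ψ)
    exact Complex.continuous_ofReal.comp ((continuous_const.sub (continuous_norm.pow 2)).max
      continuous_const)
  · intro x
    rw [norm_mul, norm_conj_mul, Complex.norm_real, Real.norm_eq_abs]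
    exact mul_le_mul_of_nonneg_right (wb x) (by positivity)

lemma int_ind_prod (φ ψ : SchwartzMap (Ed d) ℂ) (i : Fin d) :
    Integrable (fun x : Ed d => (Metric.ball (0 : Ed d) 1).indicator
      (fun y => 2 * (y i : ℂ) * ((starRingEnd ℂ) (φ y) * ψ y)) x) volume := by
  classical
  apply int_dom φ ψ
  · apply AEStronglyMeasurable.indicator _ Metric.isOpen_ball.measurableSet
    apply Continuous.aestronglyMeasurable
    apply Continuous.mul _ (cont_conj_mul φ ψ)
    exact continuous_const.mul (Complex.continuous_ofReal.comp (EuclideanSpace.proj i).continuous)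
  · intro x
    have h1 : ‖(Metric.ball (0 : Ed d) 1).indicator
        (fun y => 2 * (y i : ℂ) * ((starRingEnd ℂ) (φ y) * ψ y)) x‖
        ≤ ‖2 * (x i : ℂ) * ((starRingEnd ℂ) (φ x) * ψ x)‖ := by
      by_cases hx : x ∈ Metric.ball (0 : Ed d) 1
      · rw [Set.indicator_of_mem hx]
      · rw [Set.indicator_of_notMem hx]; simp only [norm_zero]; positivity
    apply h1.trans
    rw [norm_mul, norm_conj_mul]
    exact mul_le_mul_of_nonneg_right (xib x i) (by positivity)

/-- the key integration-by-parts identity -/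
lemma star_ibp (φ ψ : SchwartzMap (Ed d) ℂ) (i : Fin d) :
    (∫ x : Ed d, ((max (1 - ‖x‖ ^ 2) 0 : ℝ) : ℂ) *
        ((starRingEnd ℂ) ((pderivCLM ℝ (EuclideanSpace.single i 1) φ) x) * ψ x))
    + (∫ x : Ed d, ((max (1 - ‖x‖ ^ 2) 0 : ℝ) : ℂ) *
        ((starRingEnd ℂ) (φ x) * (pderivCLM ℝ (EuclideanSpace.single i 1) ψ) x))
    = ∫ x : Ed d, (Metric.ball (0 : Ed d) 1).indicator
        (fun y => 2 * (y i : ℂ) * ((starRingEnd ℂ) (φ y) * ψ y)) x := by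
  set Pφ := pderivCLM ℝ (EuclideanSpace.single i 1) φ with hPφ
  set Pψ := pderivCLM ℝ (EuclideanSpace.single i 1) ψ with hPψ
  set F : Ed d → ℂ := fun x => (starRingEnd ℂ) (φ x) * ψ x with hF
  set Fd : Ed d → ℂ := fun x =>
    (starRingEnd ℂ) (Pφ x) * ψ x + (starRingEnd ℂ) (φ x) * Pψ x with hFd
  set F' : Ed d → (Ed d →L[ℝ] ℂ) := fun x =>
    ((starRingEnd ℂ) (φ x)) • fderiv ℝ ψ x
      + (ψ x) • ((Complex.conjCLE.toContinuousLinearMap).comp (fderiv ℝ φ x)) with hF'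
  have hder : ∀ x, HasFDerivAt F (F' x) x := fun x =>
    (hasFDerivAt_conj φ x).mul ψ.differentiableAt.hasFDerivAt
  have hFdval : ∀ x, Fd x = F' x (EuclideanSpace.single i 1) := by
    intro x
    simp only [hFd, hF', ContinuousLinearMap.add_apply, ContinuousLinearMap.smul_apply,
      conj_comp_apply, smul_eq_mul]
    rw [← pderivCLM_apply ℝ (EuclideanSpace.single i 1) ψ x,
      ← pderivCLM_apply ℝ (EuclideanSpace.single i 1) φ x]
    ring
  have h := weight_ibp i F Fd F' hder hFdval (cont_conj_mul φ ψ)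
    ((cont_conj_mul Pφ ψ).add (cont_conj_mul φ Pψ))
    (int_w φ ψ (cont_conj_mul φ ψ) (fun x => le_of_eq (norm_conj_mul φ ψ x)))
    (int_w2 Pφ ψ φ Pψ ((cont_conj_mul Pφ ψ).add (cont_conj_mul φ Pψ))
      (fun x => by
        rw [← norm_conj_mul Pφ ψ x, ← norm_conj_mul φ Pψ x]
        exact norm_add_le _ _))
  rw [← h]
  rw [← integral_add (int_w_prod Pφ ψ) (int_w_prod φ Pψ)]
  apply integral_congr_ae
  filter_upwards with x
  simp only [hFd]
  ring

end main

open SchwartzMap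

/-- Symmetry of the Legendre operator under truncation by the unit ball:
⟨χ_B f, Lg⟩ = ⟨Lf, χ_B g⟩. -/
theorem legendre_truncation_symmetric (d : ℕ) (f g : SchwartzMap (Ed d) ℂ) :
    ∫ x : Ed d, (starRingEnd ℂ) ((Metric.ball (0 : Ed d) 1).indicator (⇑f) x) *
        legendreOp (⇑g) x =
      ∫ x : Ed d, (starRingEnd ℂ) (legendreOp (⇑f) x) *
        (Metric.ball (0 : Ed d) 1).indicator (⇑g) x := by
  classical
  have expandL : ∀ x : Ed d, (starRingEnd ℂ) ((Metric.ball (0 : Ed d) 1).indicator (⇑f) x) *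
      legendreOp (⇑g) x
      = ∑ i, (-(Metric.ball (0 : Ed d) 1).indicator
            (fun y => 2 * (y i : ℂ) * ((starRingEnd ℂ) (f y) *
              (pderivCLM ℝ (EuclideanSpace.single i 1) g) y)) x
          + ((max (1 - ‖x‖ ^ 2) 0 : ℝ) : ℂ) * ((starRingEnd ℂ) (f x) *
              (pderivCLM ℝ (EuclideanSpace.single i 1)
                (pderivCLM ℝ (EuclideanSpace.single i 1) g)) x)) := by
    intro x
    by_cases hx : x ∈ Metric.ball (0 : Ed d) 1
    · have h1 : ‖x‖ < 1 := by rwa [Metric.mem_ball, dist_zero_right] at hx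
      have hwx : (max (1 - ‖x‖ ^ 2) 0 : ℝ) = 1 - ‖x‖ ^ 2 :=
        max_eq_left (by nlinarith [norm_nonneg x])
      simp only [Set.indicator_of_mem hx]
      rw [legendre_expand g x, Finset.mul_sum]
      have key : ∀ i : Fin d, (starRingEnd ℂ) (f x) *
          ((((-2 * x i : ℝ)) : ℂ) * pderivCLM ℝ (EuclideanSpace.single i 1) g x
            + ((1 - ‖x‖ ^ 2 : ℝ) : ℂ) * pderivCLM ℝ (EuclideanSpace.single i 1)
                (pderivCLM ℝ (EuclideanSpace.single i 1) g) x)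
          = -(2 * (x i : ℂ) * ((starRingEnd ℂ) (f x) *
              (pderivCLM ℝ (EuclideanSpace.single i 1) g) x))
          + ((max (1 - ‖x‖ ^ 2) 0 : ℝ) : ℂ) * ((starRingEnd ℂ) (f x) *
              (pderivCLM ℝ (EuclideanSpace.single i 1)
                (pderivCLM ℝ (EuclideanSpace.single i 1) g)) x) := by
        intro i
        rw [hwx]
        push_cast
        ring
      simp only [key]
    · have h1 : (1 : ℝ) ≤ ‖x‖ := by
        by_contra h
        exact hx (by rw [Metric.mem_ball, dist_zero_right]; linarith)
      have hwx : (max (1 - ‖x‖ ^ 2) 0 : ℝ) = 0 :=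
        max_eq_right (by nlinarith [norm_nonneg x])
      simp only [Set.indicator_of_notMem hx, hwx]
      simp
  have expandR : ∀ x : Ed d, (starRingEnd ℂ) (legendreOp (⇑f) x) *
      (Metric.ball (0 : Ed d) 1).indicator (⇑g) x
      = ∑ i, (-(Metric.ball (0 : Ed d) 1).indicator
            (fun y => 2 * (y i : ℂ) * ((starRingEnd ℂ)
              ((pderivCLM ℝ (EuclideanSpace.single i 1) f) y) * g y)) x
          + ((max (1 - ‖x‖ ^ 2) 0 : ℝ) : ℂ) * ((starRingEnd ℂ)
              ((pderivCLM ℝ (EuclideanSpace.single i 1)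
                (pderivCLM ℝ (EuclideanSpace.single i 1) f)) x) * g x)) := by
    intro x
    by_cases hx : x ∈ Metric.ball (0 : Ed d) 1
    · have h1 : ‖x‖ < 1 := by rwa [Metric.mem_ball, dist_zero_right] at hx
      have hwx : (max (1 - ‖x‖ ^ 2) 0 : ℝ) = 1 - ‖x‖ ^ 2 :=
        max_eq_left (by nlinarith [norm_nonneg x])
      simp only [Set.indicator_of_mem hx]
      rw [legendre_expand f x, map_sum, Finset.sum_mul]
      have key : ∀ i : Fin d, ((starRingEnd ℂ)
          ((((-2 * x i : ℝ)) : ℂ) * pderivCLM ℝ (EuclideanSpace.single i 1) f x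
            + ((1 - ‖x‖ ^ 2 : ℝ) : ℂ) * pderivCLM ℝ (EuclideanSpace.single i 1)
                (pderivCLM ℝ (EuclideanSpace.single i 1) f) x)) * g x
          = -(2 * (x i : ℂ) * ((starRingEnd ℂ)
              ((pderivCLM ℝ (EuclideanSpace.single i 1) f) x) * g x))
          + ((max (1 - ‖x‖ ^ 2) 0 : ℝ) : ℂ) * ((starRingEnd ℂ)
              ((pderivCLM ℝ (EuclideanSpace.single i 1)
                (pderivCLM ℝ (EuclideanSpace.single i 1) f)) x) * g x) := by
        intro i
        rw [map_add, map_mul, map_mul, Complex.conj_ofReal, Complex.conj_ofReal, hwx]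
        push_cast
        ring
      simp only [key]
    · have h1 : (1 : ℝ) ≤ ‖x‖ := by
        by_contra h
        exact hx (by rw [Metric.mem_ball, dist_zero_right]; linarith)
      have hwx : (max (1 - ‖x‖ ^ 2) 0 : ℝ) = 0 :=
        max_eq_right (by nlinarith [norm_nonneg x])
      simp only [Set.indicator_of_notMem hx, hwx]
      simp
  set A : Fin d → ℂ := fun i => ∫ x : Ed d, ((max (1 - ‖x‖ ^ 2) 0 : ℝ) : ℂ) *
    ((starRingEnd ℂ) ((pderivCLM ℝ (EuclideanSpace.single i 1) f) x) *
      (pderivCLM ℝ (EuclideanSpace.single i 1) g) x) with hA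
  have hL : (∫ x : Ed d, (starRingEnd ℂ) ((Metric.ball (0 : Ed d) 1).indicator (⇑f) x) *
      legendreOp (⇑g) x) = ∑ i, -(A i) := by
    rw [integral_congr_ae (Filter.Eventually.of_forall expandL)]
    have h1 : ∀ i : Fin d, Integrable (fun x : Ed d =>
        -(Metric.ball (0 : Ed d) 1).indicator
            (fun y => 2 * (y i : ℂ) * ((starRingEnd ℂ) (f y) *
              (pderivCLM ℝ (EuclideanSpace.single i 1) g) y)) x) volume := fun i =>
      (int_ind_prod f (pderivCLM ℝ (EuclideanSpace.single i 1) g) i).neg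
    have h2 : ∀ i : Fin d, Integrable (fun x : Ed d =>
        ((max (1 - ‖x‖ ^ 2) 0 : ℝ) : ℂ) * ((starRingEnd ℂ) (f x) *
          (pderivCLM ℝ (EuclideanSpace.single i 1)
            (pderivCLM ℝ (EuclideanSpace.single i 1) g)) x)) volume := fun i =>
      int_w_prod f (pderivCLM ℝ (EuclideanSpace.single i 1)
        (pderivCLM ℝ (EuclideanSpace.single i 1) g))
    have h12 : ∀ i : Fin d, Integrable (fun x : Ed d =>
        -(Metric.ball (0 : Ed d) 1).indicator
            (fun y => 2 * (y i : ℂ) * ((starRingEnd ℂ) (f y) *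
              (pderivCLM ℝ (EuclideanSpace.single i 1) g) y)) x
          + ((max (1 - ‖x‖ ^ 2) 0 : ℝ) : ℂ) * ((starRingEnd ℂ) (f x) *
            (pderivCLM ℝ (EuclideanSpace.single i 1)
              (pderivCLM ℝ (EuclideanSpace.single i 1) g)) x)) volume := fun i =>
      (h1 i).add (h2 i)
    rw [integral_finset_sum _ (fun i _ => h12 i)]
    refine Finset.sum_congr rfl fun i _ => ?_
    rw [integral_add (h1 i) (h2 i), integral_neg]
    have h := star_ibp f (pderivCLM ℝ (EuclideanSpace.single i 1) g) i
    rw [hA]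
    linear_combination h
  have hR : (∫ x : Ed d, (starRingEnd ℂ) (legendreOp (⇑f) x) *
      (Metric.ball (0 : Ed d) 1).indicator (⇑g) x) = ∑ i, -(A i) := by
    rw [integral_congr_ae (Filter.Eventually.of_forall expandR)]
    have h1 : ∀ i : Fin d, Integrable (fun x : Ed d =>
        -(Metric.ball (0 : Ed d) 1).indicator
            (fun y => 2 * (y i : ℂ) * ((starRingEnd ℂ)
              ((pderivCLM ℝ (EuclideanSpace.single i 1) f) y) * g y)) x) volume := fun i =>
      (int_ind_prod (pderivCLM ℝ (EuclideanSpace.single i 1) f) g i).neg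
    have h2 : ∀ i : Fin d, Integrable (fun x : Ed d =>
        ((max (1 - ‖x‖ ^ 2) 0 : ℝ) : ℂ) * ((starRingEnd ℂ)
          ((pderivCLM ℝ (EuclideanSpace.single i 1)
            (pderivCLM ℝ (EuclideanSpace.single i 1) f)) x) * g x)) volume := fun i =>
      int_w_prod (pderivCLM ℝ (EuclideanSpace.single i 1)
        (pderivCLM ℝ (EuclideanSpace.single i 1) f)) g
    have h12 : ∀ i : Fin d, Integrable (fun x : Ed d =>
        -(Metric.ball (0 : Ed d) 1).indicator
            (fun y => 2 * (y i : ℂ) * ((starRingEnd ℂ)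
              ((pderivCLM ℝ (EuclideanSpace.single i 1) f) y) * g y)) x
          + ((max (1 - ‖x‖ ^ 2) 0 : ℝ) : ℂ) * ((starRingEnd ℂ)
            ((pderivCLM ℝ (EuclideanSpace.single i 1)
              (pderivCLM ℝ (EuclideanSpace.single i 1) f)) x) * g x)) volume := fun i =>
      (h1 i).add (h2 i)
    rw [integral_finset_sum _ (fun i _ => h12 i)]
    refine Finset.sum_congr rfl fun i _ => ?_
    rw [integral_add (h1 i) (h2 i), integral_neg]
    have h := star_ibp (pderivCLM ℝ (EuclideanSpace.single i 1) f) g i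
    rw [hA]
    linear_combination h
  rw [hL, hR]
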